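/- arXiv:2212.00232 — 4 statements merged into one kernel-verified Lean document; each statement's English description precedes it below -/
import Mathlib

section
/- Let G be a finite group and let U, V ≤ G be subgroups that are Gassmann-equivalent in G, i.e., |C ∩ U| = |C ∩ V| for every conjugacy class C of G. Then for every transitive action of G on a finite set X, the number of orbits of U on X equals the number of orbits of V on X. -/
noncomputable section

open MulAction

private lemma fixedBy_card_conj {G : Type*} [Group G] (X : Type*) [MulAction G X]
    {g h : G} (hc : IsConj g h) :
    Nat.card (fixedBy X g) = Nat.card (fixedBy X h) := by
  rw [isConj_iff] at hc
  obtain ⟨c, rfl⟩ := hc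
  rw [← MulAction.smul_fixedBy]
  simp only [Nat.card_coe_set_eq, Set.ncard_smul_set]

private lemma sum_over_subgroup_classwise {G : Type*} [Group G] [Finite G]
    (W : Subgroup G) [Fintype W] [Fintype (ConjClasses G)]
    (f : G → ℕ) (hf : ∀ g h : G, IsConj g h → f g = f h) :
    ∑ u : W, f ↑u
      = ∑ c : ConjClasses G,
          Nat.card {x : G // x ∈ W ∧ IsConj (Quotient.out c) x} * f (Quotient.out c) := by
  classical
  rw [← Finset.sum_fiberwise Finset.univ (fun u : W => ConjClasses.mk (↑u : G)) (fun u => f ↑u)]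
  refine Finset.sum_congr rfl fun c _ => ?_
  have hrep : ∀ u : W, u ∈ Finset.univ.filter (fun u : W => ConjClasses.mk (↑u : G) = c) →
      f ↑u = f (Quotient.out c) := by
    intro u hu
    rw [Finset.mem_filter] at hu
    refine (hf _ _ ?_).symm
    rw [← ConjClasses.mk_eq_mk_iff_isConj, ← hu.2]
    exact Quotient.out_eq _
  rw [Finset.sum_congr rfl hrep, Finset.sum_const, smul_eq_mul]
  congr 1
  rw [← Nat.card_eq_finsetCard]
  refine Nat.card_congr ?_
  refine { toFun := fun u => ⟨(↑(u : W) : G), (u : W).2, ?_⟩,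
           invFun := fun x => ⟨⟨x.1, x.2.1⟩, ?_⟩, left_inv := ?_, right_inv := ?_ }
  · have := u.2
    rw [Finset.mem_filter] at this
    rw [← ConjClasses.mk_eq_mk_iff_isConj, this.2]
    exact Quotient.out_eq _
  · rw [Finset.mem_filter]
    exact ⟨Finset.mem_univ _,
      ((ConjClasses.mk_eq_mk_iff_isConj.mpr x.2.2).symm).trans (Quotient.out_eq _)⟩
  · intro u; rfl
  · intro x; rfl

/-- Gassmann-equivalent subgroups of a finite group have the same number of
orbits in any transitive action of the group on a finite set. -/
theorem gassmann_equal_orbit_counts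
    (G : Type*) [Group G] [Finite G] (U V : Subgroup G)
    (hGass : ∀ g : G, Nat.card {x : G // x ∈ U ∧ IsConj g x}
                    = Nat.card {x : G // x ∈ V ∧ IsConj g x})
    (X : Type*) [Finite X] [MulAction G X]
    (htrans : ∀ x y : X, ∃ g : G, g • x = y) :
    Nat.card (MulAction.orbitRel.Quotient U X)
      = Nat.card (MulAction.orbitRel.Quotient V X) := by
  classical
  haveI : Fintype U := Fintype.ofFinite U
  haveI : Fintype V := Fintype.ofFinite V
  haveI : Fintype (ConjClasses G) := Fintype.ofFinite _
  haveI : Fintype X := Fintype.ofFinite X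
  haveI : ∀ a : U, Fintype (fixedBy X a) := fun a => Fintype.ofFinite _
  haveI : ∀ a : V, Fintype (fixedBy X a) := fun a => Fintype.ofFinite _
  haveI : Fintype (orbitRel.Quotient U X) := Fintype.ofFinite _
  haveI : Fintype (orbitRel.Quotient V X) := Fintype.ofFinite _
  set f : G → ℕ := fun g => Nat.card (fixedBy X g) with hfdef
  have hclass : ∀ g h : G, IsConj g h → f g = f h := fun g h hc => fixedBy_card_conj X hc
  have hfixU : ∀ u : U, Fintype.card (fixedBy X (u : U)) = f ↑u := fun u =>
    Nat.card_eq_fintype_card.symm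
  have hfixV : ∀ v : V, Fintype.card (fixedBy X (v : V)) = f ↑v := fun v =>
    Nat.card_eq_fintype_card.symm
  have hBU := MulAction.sum_card_fixedBy_eq_card_orbits_mul_card_group U X
  have hBV := MulAction.sum_card_fixedBy_eq_card_orbits_mul_card_group V X
  have hsum : ∑ u : U, f ↑u = ∑ v : V, f ↑v := by
    rw [sum_over_subgroup_classwise U f hclass, sum_over_subgroup_classwise V f hclass]
    exact Finset.sum_congr rfl fun c _ => by rw [hGass]
  have hcardUV : Fintype.card U = Fintype.card V := by
    have h1 := sum_over_subgroup_classwise U (fun _ => 1) (fun _ _ _ => rfl)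
    have h2 := sum_over_subgroup_classwise V (fun _ => 1) (fun _ _ _ => rfl)
    simp only [Finset.sum_const, smul_eq_mul, mul_one] at h1 h2
    rw [Finset.card_univ] at h1 h2
    rw [h1, h2]
    exact Finset.sum_congr rfl fun c _ => by rw [hGass]
  have key : Fintype.card (orbitRel.Quotient U X) * Fintype.card U
      = Fintype.card (orbitRel.Quotient V X) * Fintype.card U := by
    rw [← hBU]
    conv_rhs => rw [hcardUV, ← hBV]
    rw [Finset.sum_congr rfl fun u _ => hfixU u, Finset.sum_congr rfl fun v _ => hfixV v]
    exact hsum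
  have hUpos : 0 < Fintype.card U := Fintype.card_pos
  have h := Nat.eq_of_mul_eq_mul_right hUpos key
  rw [Nat.card_eq_fintype_card, Nat.card_eq_fintype_card]
  exact h
end
end

section
/- Let G be a finite group acting doubly transitively on a finite set X with |X| ≥ 2, and let H ≤ G be a subgroup with index [G:H] < |X|. Then H acts transitively on X. -/
/-!
If `H` is not transitive, let `O` be an `H`-orbit, so `∅ ≠ O ≠ X`. By double transitivity the
translates `g • O`, `g ∈ G`, form a `2`-design on `X`: the number of `g` with `x, y ∈ g • O` is
some `r` when `x = y` and some `l < r` when `x ≠ y`. So the Gram matrix of the incidence matrix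
is `(r - l) • 1 + l • J`, which is nonsingular, and the incidence matrix has rank `|X|` (Fisher's
inequality). But `g • O` only depends on the coset `g H`, so the incidence matrix has at most
`[G : H]` distinct rows, whence `|X| ≤ [G : H]`.
-/

noncomputable section

open Matrix

namespace Matrix

variable {m n ι R : Type*}

theorem rank_le_card_of_row_eq [Fintype n] [Finite ι] [CommSemiring R] [StrongRankCondition R]
    (M : Matrix m n R) (f : m → ι) (hf : Function.Surjective f)
    (hrow : ∀ i j, f i = f j → M i = M j) : M.rank ≤ Nat.card ι := by
  have := Fintype.ofFinite ι
  have hM : M = (M.submatrix (Function.surjInv hf) id).submatrix f id := by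
    ext i z
    exact congrFun (hrow _ _ (Function.surjInv_eq hf (f i)).symm) z
  rw [hM, Nat.card_eq_fintype_card]
  exact (rank_submatrix_le _ _ _).trans (rank_le_card_height _)

theorem rank_eq_card_of_gram [Fintype m] [Fintype n] [DecidableEq n] [Field R] [LinearOrder R]
    [IsStrictOrderedRing R] (M : Matrix m n R) (r l : R)
    (hdiag : ∀ x, (Mᵀ * M) x x = r) (hoff : ∀ x y, x ≠ y → (Mᵀ * M) x y = l)
    (hl : 0 ≤ l) (hlr : l < r) : M.rank = Fintype.card n := by
  have hgram : ∀ (v : n → R) x, ((Mᵀ * M) *ᵥ v) x = (r - l) * v x + l * ∑ y, v y := by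
    intro v x
    rw [mulVec, dotProduct, ← Finset.add_sum_erase _ _ (Finset.mem_univ x),
      ← Finset.add_sum_erase _ _ (Finset.mem_univ x), mul_add, hdiag,
      Finset.sum_congr rfl fun y hy => by rw [hoff x y (Finset.ne_of_mem_erase hy).symm],
      ← Finset.mul_sum]
    ring
  have hinj : Function.Injective (Mᵀ * M).mulVec := by
    rw [← coe_mulVecLin, ← LinearMap.ker_eq_bot, LinearMap.ker_eq_bot']
    intro v hv
    have hx : ∀ x, (r - l) * v x + l * ∑ y, v y = 0 := fun x => by
      rw [← hgram]; exact congrFun hv x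
    have hsum : ∑ y, v y = 0 := by
      have htot := Finset.sum_eq_zero (s := Finset.univ) fun x _ => hx x
      rw [Finset.sum_add_distrib, ← Finset.mul_sum, Finset.sum_const, Finset.card_univ,
        nsmul_eq_mul] at htot
      have hpos : 0 < (r - l) + Fintype.card n * l := by
        have := sub_pos.mpr hlr
        positivity
      have hfactor : ((r - l) + Fintype.card n * l) * ∑ y, v y = 0 := by
        linear_combination htot
      exact (mul_eq_zero.mp hfactor).resolve_left hpos.ne'
    funext x
    simpa [hsum, (sub_pos.mpr hlr).ne'] using hx x
  rw [← rank_transpose_mul_self, rank_of_isUnit _ (mulVec_injective_iff_isUnit.mp hinj)]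

end Matrix

namespace MulAction

variable (G : Type*) {X : Type*} [Group G] [MulAction G X]

open scoped Classical in
def translateIncidence (O : Set X) : Matrix G X ℚ :=
  Matrix.of fun g z => if g⁻¹ • z ∈ O then 1 else 0

variable {G} (O : Set X)

local notation "𝕄" => translateIncidence G O

theorem translateIncidence_mul_smul (u g : G) (z : X) :
    𝕄 (u * g) (u • z) = 𝕄 g z := by
  rw [translateIncidence, of_apply, of_apply, _root_.mul_inv_rev, mul_smul, inv_smul_smul]

variable [Fintype G]

theorem gram_translateIncidence_smul (u : G) (x y : X) :
    (𝕄ᵀ * 𝕄) (u • x) (u • y) = (𝕄ᵀ * 𝕄) x y := by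
  simp only [mul_apply, transpose_apply]
  exact (Fintype.sum_equiv (Equiv.mulLeft u) _ _ fun g => by
    simp [translateIncidence_mul_smul]).symm

theorem gram_translateIncidence_nonneg (x y : X) : 0 ≤ (𝕄ᵀ * 𝕄) x y :=
  Finset.sum_nonneg fun g _ => by
    simp only [transpose_apply, translateIncidence, of_apply]; split_ifs <;> norm_num

theorem gram_translateIncidence_lt {a b : X} (ha : a ∈ O) (hb : b ∉ O) :
    (𝕄ᵀ * 𝕄) a b < (𝕄ᵀ * 𝕄) a a := by
  refine Finset.sum_lt_sum (fun g _ => ?_) ⟨1, Finset.mem_univ _, ?_⟩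
  · simp only [transpose_apply, translateIncidence, of_apply]; split_ifs <;> norm_num
  · simp [translateIncidence, ha, hb]

theorem rank_translateIncidence_le_index [Fintype X] {H : Subgroup G}
    (hO : ∀ h ∈ H, ∀ z : X, h • z ∈ O ↔ z ∈ O) : (𝕄).rank ≤ H.index := by
  rw [H.index_eq_card]
  refine rank_le_card_of_row_eq _ ((↑) : G → G ⧸ H) QuotientGroup.mk_surjective fun g g' hgg' => ?_
  obtain ⟨h, hh, rfl⟩ : ∃ h ∈ H, g' = g * h := ⟨g⁻¹ * g', QuotientGroup.eq.mp hgg', by group⟩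
  funext z
  rw [translateIncidence, of_apply, of_apply, _root_.mul_inv_rev, mul_smul, hO _ (H.inv_mem hh)]

theorem rank_translateIncidence_eq_card [Fintype X] [IsMultiplyPretransitive G X 2]
    {a b : X} (ha : a ∈ O) (hb : b ∉ O) : (𝕄).rank = Fintype.card X := by
  classical
  have : IsPretransitive G X := isPretransitive_of_is_two_pretransitive
  have hab : a ≠ b := fun h => hb (h ▸ ha)
  refine rank_eq_card_of_gram _ _ _ (fun x => ?_) (fun x y hxy => ?_)
    (gram_translateIncidence_nonneg O a b) (gram_translateIncidence_lt (G := G) O ha hb)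
  · obtain ⟨u, rfl⟩ := exists_smul_eq G a x
    exact gram_translateIncidence_smul O u a a
  · obtain ⟨u, rfl, rfl⟩ := is_two_pretransitive_iff.mp ‹_› hab hxy
    exact gram_translateIncidence_smul O u a b

end MulAction

open MulAction in
theorem transitive_of_index_lt_card_of_two_transitive_general
    (G : Type*) [Group G] [Finite G] (X : Type*) [Finite X] [MulAction G X]
    (h2trans : ∀ x₁ x₂ y₁ y₂ : X, x₁ ≠ x₂ → y₁ ≠ y₂ →
        ∃ g : G, g • x₁ = y₁ ∧ g • x₂ = y₂)
    (H : Subgroup G) (hH : H.index < Nat.card X) :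
    ∀ x y : X, ∃ h ∈ H, h • x = y := by
  have := Fintype.ofFinite G
  have := Fintype.ofFinite X
  have : IsMultiplyPretransitive G X 2 :=
    is_two_pretransitive_iff.mpr fun hab hcd => h2trans _ _ _ _ hab hcd
  by_contra! ⟨x, y, hxy⟩
  have hy : y ∉ orbit H x := fun ⟨h, hh⟩ => hxy h h.2 hh
  have hO : ∀ h ∈ H, ∀ z : X, h • z ∈ orbit H x ↔ z ∈ orbit H x := fun h hh z => by
    rw [← orbit_eq_iff, ← orbit_eq_iff, ← orbit_smul (⟨h, hh⟩ : H) z, Subgroup.mk_smul]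
  have hle := rank_translateIncidence_le_index (G := G) (orbit H x) hO
  rw [rank_translateIncidence_eq_card (G := G) (orbit H x) (mem_orbit_self x) hy] at hle
  rw [Nat.card_eq_fintype_card] at hH
  omega

/-- a subgroup of index smaller than `|X|` of a finite group acting doubly
transitively on a finite set `X` with `|X| ≥ 2` acts transitively on `X`. -/
theorem transitive_of_index_lt_card_of_two_transitive
    (G : Type*) [Group G] [Finite G] (X : Type*) [Finite X] [MulAction G X]
    (hcard : 2 ≤ Nat.card X)
    (h2trans : ∀ x₁ x₂ y₁ y₂ : X, x₁ ≠ x₂ → y₁ ≠ y₂ →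
        ∃ g : G, g • x₁ = y₁ ∧ g • x₂ = y₂)
    (H : Subgroup G) (hH : H.index < Nat.card X) :
    ∀ x y : X, ∃ h ∈ H, h • x = y :=
  transitive_of_index_lt_card_of_two_transitive_general G X h2trans H hH

end
end

section
/- Let G be a finite group acting faithfully and transitively on a finite set X such that the stabilizer of each point of X is nontrivial and every non-identity element of G fixes at most one point of X (i.e., G acts as a Frobenius permutation group on X). If U ≤ G is a subgroup such that every element of U fixes at least one point of X, then there exists a point of X fixed by every element of U. -/
/-!
By Burnside's lemma, if every `u ≠ 1` in a finite group `U` fixes exactly one point of `X`, the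
orbits `O` of `U` satisfy `∑_O (|U| - |O|) = |U| - 1`. If no orbit were a single point, then, as
`|O|` divides `|U|`, every nonzero term would lie between `|U| / 2` and `|U| - 2`, and no sum of
such terms equals `|U| - 1`.
-/

open MulAction

theorem Nat.two_mul_le_of_dvd_of_lt {d n : ℕ} (hdn : d ∣ n) (hlt : d < n) : 2 * d ≤ n := by
  obtain ⟨k, rfl⟩ := hdn
  have : 2 ≤ k := by
    rcases k with _ | _ | k
    · simp at hlt
    · simp at hlt
    · omega
  nlinarith

theorem Finset.exists_eq_one_of_sum_sub_eq_pred {ι : Type*} {s : Finset ι} {n : ℕ}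
    {d : ι → ℕ} (hs : s.Nonempty) (hn : 0 < n) (hd : ∀ i ∈ s, d i ∣ n)
    (hsum : ∑ i ∈ s, (n - d i) = n - 1) : ∃ i ∈ s, d i = 1 := by
  classical
  by_contra! hne
  have hbounds : ∀ i ∈ s, 2 ≤ d i ∧ d i ≤ n := fun i hi => by
    have := Nat.pos_of_dvd_of_pos (hd i hi) hn
    exact ⟨by have := hne i hi; omega, Nat.le_of_dvd hn (hd i hi)⟩
  have hhalf : ∀ i ∈ s, d i < n → 2 * d i ≤ n := fun i hi =>
    Nat.two_mul_le_of_dvd_of_lt (hd i hi)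
  obtain ⟨i, hi, hi0⟩ : ∃ i ∈ s, n - d i ≠ 0 := by
    refine exists_ne_zero_of_sum_ne_zero ?_
    obtain ⟨i, hi⟩ := hs
    have := hbounds i hi
    omega
  obtain ⟨j, hj, hj0⟩ : ∃ j ∈ s.erase i, n - d j ≠ 0 := by
    refine exists_ne_zero_of_sum_ne_zero ?_
    have := add_sum_erase s (fun k => n - d k) hi
    have := hbounds i hi
    omega
  have hle : (n - d i) + (n - d j) ≤ ∑ k ∈ s, (n - d k) := by
    rw [← add_sum_erase s _ hi]
    exact Nat.add_le_add_left
      (single_le_sum (f := fun k => n - d k) (fun _ _ => Nat.zero_le _) hj) _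
  have := hhalf i hi (by omega)
  have := hhalf j (mem_of_mem_erase hj) (by omega)
  omega

namespace MulAction

variable {U X : Type*} [Group U] [MulAction U X]

theorem card_orbit_dvd_card [Finite U] (x : X) : Nat.card (orbit U x) ∣ Nat.card U := by
  rw [Nat.card_coe_set_eq, ← index_stabilizer]
  exact Subgroup.index_dvd_card _

theorem card_orbitRel_quotient_mul_card_eq [Finite U] [Finite X]
    (hfix : ∀ u : U, u ≠ 1 → ∃! x : X, u • x = x) :
    Nat.card (orbitRel.Quotient U X) * Nat.card U = Nat.card X + (Nat.card U - 1) := by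
  classical
  have := Fintype.ofFinite U
  have := Fintype.ofFinite X
  have hone : ∀ u : U, u ≠ 1 → Fintype.card (fixedBy X u) = 1 := fun u hu => by
    obtain ⟨x, hx, huniq⟩ := hfix u hu
    exact Fintype.card_eq_one_iff.mpr ⟨⟨x, hx⟩, fun y => Subtype.ext (huniq y y.2)⟩
  rw [Nat.card_eq_fintype_card, Nat.card_eq_fintype_card, Nat.card_eq_fintype_card,
    ← sum_card_fixedBy_eq_card_orbits_mul_card_group,
    ← Finset.add_sum_erase _ _ (Finset.mem_univ 1),
    Finset.sum_congr rfl (fun u hu => hone u (Finset.ne_of_mem_erase hu))]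
  simp [Finset.card_erase_of_mem]

theorem fixedPoints_nonempty_of_existsUnique_fixed [Finite U] [Finite X] [Nonempty X]
    (hfix : ∀ u : U, u ≠ 1 → ∃! x : X, u • x = x) : (fixedPoints U X).Nonempty := by
  have := Fintype.ofFinite (orbitRel.Quotient U X)
  have : Nonempty (orbitRel.Quotient U X) := ⟨Quotient.mk _ (Classical.arbitrary X)⟩
  have hX : Nat.card X = ∑ ω : orbitRel.Quotient U X, Nat.card (orbit U ω.out) := by
    rw [Nat.card_congr (selfEquivSigmaOrbits U X), Nat.card_sigma]
  have hsum : ∑ ω : orbitRel.Quotient U X, (Nat.card U - Nat.card (orbit U ω.out))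
      = Nat.card U - 1 := by
    rw [Finset.sum_tsub_distrib _ (fun ω _ => Nat.le_of_dvd Nat.card_pos (card_orbit_dvd_card _)),
      Finset.sum_const, Finset.card_univ, smul_eq_mul, ← Nat.card_eq_fintype_card,
      card_orbitRel_quotient_mul_card_eq hfix, hX]
    omega
  obtain ⟨ω, -, hω⟩ := Finset.exists_eq_one_of_sum_sub_eq_pred Finset.univ_nonempty
    Nat.card_pos (fun ω _ => card_orbit_dvd_card ω.out) hsum
  exact ⟨ω.out, subsingleton_orbit_iff_mem_fixedPoints.mp
    (Set.subsingleton_coe _ |>.mp (Nat.card_eq_one_iff_unique.mp hω).1)⟩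

end MulAction

theorem frobenius_common_fixed_point_general
    (G : Type*) [Group G] [Finite G] (X : Type*) [Finite X] [MulAction G X]
    (hfrob : ∀ g : G, g ≠ 1 → ∀ x y : X, g • x = x → g • y = y → x = y)
    (U : Subgroup G) (hU : ∀ u ∈ U, ∃ x : X, u • x = x) :
    ∃ x : X, ∀ u ∈ U, u • x = x := by
  obtain ⟨x₀, -⟩ := hU 1 U.one_mem
  have : Nonempty X := ⟨x₀⟩
  have hfix : ∀ u : U, u ≠ 1 → ∃! x : X, u • x = x := fun u hu => by
    obtain ⟨x, hx⟩ := hU u u.2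
    exact ⟨x, hx, fun y hy => hfrob u (by simpa using hu) y x hy hx⟩
  obtain ⟨x, hx⟩ := fixedPoints_nonempty_of_existsUnique_fixed hfix
  exact ⟨x, fun u hu => hx ⟨u, hu⟩⟩

/-- in a finite Frobenius permutation group, a subgroup all of whose
elements have a fixed point has a common fixed point. -/
theorem frobenius_common_fixed_point
    (G : Type*) [Group G] [Finite G] (X : Type*) [Finite X] [MulAction G X]
    (hfaith : ∀ g : G, (∀ x : X, g • x = x) → g = 1)
    (htrans : ∀ x y : X, ∃ g : G, g • x = y)
    (hstab : ∀ x : X, ∃ g : G, g ≠ 1 ∧ g • x = x)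
    (hfrob : ∀ g : G, g ≠ 1 → ∀ x y : X, g • x = x → g • y = y → x = y)
    (U : Subgroup G) (hU : ∀ u ∈ U, ∃ x : X, u • x = x) :
    ∃ x : X, ∀ u ∈ U, u • x = x :=
  frobenius_common_fixed_point_general G X hfrob U hU
end

section
/- Let X be a finite set with |X| ≤ 4, let G be a subgroup of the symmetric group Sym(X) acting transitively on X, and let U ≤ G be a subgroup such that every element of U has at least one fixed point in X. Then there exists a point of X fixed by every element of U. -/
noncomputable section

open MulAction

private lemma aux_mem_pair_cfp {α : Type*} [Finite α] {s : Set α} (h2 : s.ncard ≤ 2)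
    {y z w : α} (hy : y ∈ s) (hz : z ∈ s) (hyz : y ≠ z) (hw : w ∈ s) :
    w = y ∨ w = z := by
  by_contra h
  push_neg at h
  have hsub : ({w, y, z} : Set α) ⊆ s := by
    intro t ht
    simp only [Set.mem_insert_iff, Set.mem_singleton_iff] at ht
    rcases ht with rfl | rfl | rfl <;> assumption
  have h3 : ({w, y, z} : Set α).ncard = 3 := by
    rw [Set.ncard_insert_of_notMem (by simp [h.1, h.2]) (Set.toFinite _),
        Set.ncard_insert_of_notMem (by simp [hyz]) (Set.toFinite _), Set.ncard_singleton]
  have := Set.ncard_le_ncard hsub (Set.toFinite s)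
  omega

/-- if `G` is a transitive permutation group on a set `X` with at most `4`
points and `U ≤ G` is a subgroup all of whose elements have a fixed point, then `U` has a
common fixed point. -/
theorem common_fixed_point_of_degree_le_four
    (X : Type*) [Finite X] (hX : Nat.card X ≤ 4)
    (G : Subgroup (Equiv.Perm X))
    (htrans : ∀ x y : X, ∃ g ∈ G, g x = y)
    (U : Subgroup (Equiv.Perm X)) (hUG : U ≤ G)
    (hfix : ∀ u ∈ U, ∃ x : X, (u : Equiv.Perm X) x = x) :
    ∃ x : X, ∀ u ∈ U, (u : Equiv.Perm X) x = x := by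
  classical
  haveI : Fintype X := Fintype.ofFinite X
  obtain ⟨x0, -⟩ := hfix 1 U.one_mem
  haveI : Nonempty X := ⟨x0⟩
  by_contra hcon
  push_neg at hcon
  have hno : ∀ x : X, ∃ u : ↥U, u • x ≠ x := by
    intro x
    obtain ⟨u, hu, hne⟩ := hcon x
    exact ⟨⟨u, hu⟩, hne⟩
  have hfix' : ∀ u : ↥U, ∃ x : X, u • x = x := fun u => hfix u u.2
  have horb2 : ∀ x : X, 1 < (orbit ↥U x).ncard := by
    intro x
    obtain ⟨u, hu⟩ := hno x
    exact (Set.one_lt_ncard (Set.toFinite _)).mpr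
      ⟨u • x, mem_orbit x u, x, mem_orbit_self x, hu⟩
  -- key sublemma: if an orbit has at most 2 points and `u` fixes a point of it,
  -- then `u` fixes the base point
  have key : ∀ (c : X) (u : ↥U), (orbit ↥U c).ncard ≤ 2 →
      (∃ x ∈ orbit ↥U c, u • x = x) → u • c = c := by
    rintro c u hle ⟨x, hx, hux⟩
    by_cases hxc : x = c
    · subst hxc; exact hux
    · rcases aux_mem_pair_cfp hle (mem_orbit_self c) hx (Ne.symm hxc) (mem_orbit c u) with
        h | h
      · exact h
      · exact absurd (MulAction.injective u (h.trans hux.symm)) (Ne.symm hxc)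
  by_cases htriv : ∀ x y : X, x ∈ orbit ↥U y
  · -- transitive case : Burnside counting gives a contradiction
    haveI : Fintype ↥U := Fintype.ofFinite _
    haveI : ∀ a : ↥U, Fintype (fixedBy X a) := fun a => Fintype.ofFinite _
    haveI hpre : IsPretransitive ↥U X :=
      ⟨fun x y => mem_orbit_iff.mp (htriv y x)⟩
    haveI hsub : Subsingleton (orbitRel.Quotient ↥U X) :=
      (pretransitive_iff_subsingleton_quotient ↥U X).mp hpre
    haveI : Fintype (orbitRel.Quotient ↥U X) := Fintype.ofFinite _
    haveI : Nonempty (orbitRel.Quotient ↥U X) := ⟨Quotient.mk'' x0⟩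
    have hΩle : Fintype.card (orbitRel.Quotient ↥U X) ≤ 1 :=
      Fintype.card_le_one_iff_subsingleton.mpr hsub
    have hΩpos : 0 < Fintype.card (orbitRel.Quotient ↥U X) := Fintype.card_pos
    have hb := MulAction.sum_card_fixedBy_eq_card_orbits_mul_card_group ↥U X
    have h1 : Fintype.card (fixedBy X (1 : ↥U)) = Fintype.card X :=
      Fintype.card_congr (Equiv.subtypeUnivEquiv fun x => one_smul _ x)
    have hterm : ∀ u : ↥U, 1 ≤ Fintype.card (fixedBy X u) := by
      intro u
      obtain ⟨x, hx⟩ := hfix' u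
      exact Fintype.card_pos_iff.mpr ⟨⟨x, hx⟩⟩
    have hsplit : Fintype.card (fixedBy X (1 : ↥U)) +
        ∑ u ∈ Finset.univ.erase (1 : ↥U), Fintype.card (fixedBy X u) =
        ∑ u : ↥U, Fintype.card (fixedBy X u) :=
      Finset.add_sum_erase Finset.univ (fun u : ↥U => Fintype.card (fixedBy X u))
        (Finset.mem_univ 1)
    have hlow : (Finset.univ.erase (1 : ↥U)).card ≤
        ∑ u ∈ Finset.univ.erase (1 : ↥U), Fintype.card (fixedBy X u) := by
      have := Finset.sum_le_sum (s := Finset.univ.erase (1 : ↥U))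
        (f := fun _ => 1) (g := fun u : ↥U => Fintype.card (fixedBy X u))
        (fun u _ => hterm u)
      simpa using this
    have hcarderase : (Finset.univ.erase (1 : ↥U)).card = Fintype.card ↥U - 1 := by
      rw [Finset.card_erase_of_mem (Finset.mem_univ _), Finset.card_univ]
    have hn2 : 2 ≤ Fintype.card X := by
      obtain ⟨u, hu⟩ := hno x0
      exact Fintype.one_lt_card_iff_nontrivial.mpr ⟨⟨u • x0, x0, hu⟩⟩
    have hU1 : 1 ≤ Fintype.card ↥U := Fintype.card_pos
    rw [← hsplit, h1] at hb
    have hΩ : Fintype.card (orbitRel.Quotient ↥U X) = 1 := le_antisymm hΩle hΩpos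
    rw [hΩ, one_mul] at hb
    omega
  · -- at least two orbits : they both have exactly two points
    push_neg at htriv
    obtain ⟨b, a, hab⟩ := htriv
    have hdisj : ∀ c d : X, c ∉ orbit ↥U d → Disjoint (orbit ↥U d) (orbit ↥U c) := by
      intro c d h
      rw [Set.disjoint_left]
      intro z hzd hzc
      exact h (by
        have e1 : orbit ↥U z = orbit ↥U d := orbit_eq_iff.mpr hzd
        have e2 : orbit ↥U z = orbit ↥U c := orbit_eq_iff.mpr hzc
        rw [← e1, e2]; exact mem_orbit_self c)
    have hcardX : (Set.univ : Set X).ncard = Nat.card X := Set.ncard_univ X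
    have hsum_le : (orbit ↥U a).ncard + (orbit ↥U b).ncard ≤ 4 := by
      have e := Set.ncard_union_eq (hdisj b a hab) (Set.toFinite _) (Set.toFinite _)
      have hle : ((orbit ↥U a) ∪ (orbit ↥U b)).ncard ≤ (Set.univ : Set X).ncard :=
        Set.ncard_le_ncard (Set.subset_univ _) (Set.toFinite _)
      omega
    have ha2 : (orbit ↥U a).ncard ≤ 2 := by have := horb2 b; omega
    have hb2 : (orbit ↥U b).ncard ≤ 2 := by have := horb2 a; omega
    have hcover : ∀ x : X, x ∈ orbit ↥U a ∨ x ∈ orbit ↥U b := by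
      intro x
      by_contra h
      push_neg at h
      have dU : Disjoint ((orbit ↥U a) ∪ (orbit ↥U b)) (orbit ↥U x) :=
        Set.disjoint_union_left.mpr ⟨hdisj x a h.1, hdisj x b h.2⟩
      have e1 := Set.ncard_union_eq (hdisj b a hab) (Set.toFinite _) (Set.toFinite _)
      have e2 := Set.ncard_union_eq dU (Set.toFinite _) (Set.toFinite _)
      have hle : (((orbit ↥U a) ∪ (orbit ↥U b)) ∪ (orbit ↥U x)).ncard ≤
          (Set.univ : Set X).ncard :=
        Set.ncard_le_ncard (Set.subset_univ _) (Set.toFinite _)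
      have := horb2 x
      have := horb2 a
      have := horb2 b
      omega
    have H : ∀ u : ↥U, u • a = a ∨ u • b = b := by
      intro u
      obtain ⟨x, hx⟩ := hfix' u
      rcases hcover x with h | h
      · exact Or.inl (key a u ha2 ⟨x, h, hx⟩)
      · exact Or.inr (key b u hb2 ⟨x, h, hx⟩)
    obtain ⟨u1, hu1⟩ := hno a
    obtain ⟨u2, hu2⟩ := hno b
    have hb1 : u1 • b = b := (H u1).resolve_left hu1
    have ha1 : u2 • a = a := (H u2).resolve_right hu2
    rcases H (u2 * u1) with h | h
    · rw [mul_smul] at h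
      exact hu1 (MulAction.injective u2 (h.trans ha1.symm))
    · rw [mul_smul, hb1] at h
      exact hu2 h

end
end
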